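/- arXiv:2504.16535 — 5 statements merged into one kernel-verified Lean document; each statement's English description precedes it below -/
import Mathlib

section
/- (Knight's identity) Fix τ ∈ (0,1) and let ρ_τ(t) = t(τ − 1_{t<0}). Then for all u, v ∈ ℝ, ρ_τ(u − v) − ρ_τ(u) = −v(τ − 1_{u≤0}) + ∫₀^v (1_{u≤s} − 1_{u≤0}) ds. -/
open MeasureTheory

/-- The quantile (check) loss `ρ_τ(t) = t(τ − 1_{t<0})`. -/
noncomputable def quantileLoss (τ t : ℝ) : ℝ := t * (τ - if t < 0 then 1 else 0)

lemma step_mono (u : ℝ) : Monotone (fun s : ℝ => if u ≤ s then (1:ℝ) else 0) := by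
  intro a b hab
  dsimp only
  split_ifs with h1 h2 <;> first | linarith | norm_num

lemma step_ii (u a b : ℝ) :
    IntervalIntegrable (fun s : ℝ => if u ≤ s then (1:ℝ) else 0) volume a b :=
  (step_mono u).intervalIntegrable

lemma step_int_one (u a b : ℝ) (h : ∀ s ∈ Set.uIcc a b, u ≤ s) :
    ∫ s in a..b, (if u ≤ s then (1:ℝ) else 0) = b - a := by
  rw [intervalIntegral.integral_congr (g := fun _ => (1:ℝ))
    (fun s hs => by simp [h s hs])]
  simp

lemma step_int_zero (u a b : ℝ) (h : ∀ s ∈ Set.uIoc a b, s ≤ u) :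
    ∫ s in a..b, (if u ≤ s then (1:ℝ) else 0) = 0 := by
  rw [intervalIntegral.integral_congr_ae (g := fun _ => (0:ℝ))]
  · simp
  · have hne : ∀ᵐ s : ℝ, s ≠ u := compl_mem_ae_iff.mpr (measure_singleton u)
    filter_upwards [hne] with s hs hmem
    have := h s hmem
    rw [if_neg (by intro hh; exact hs (le_antisymm this hh))]

lemma step_integral (u v : ℝ) :
    ∫ s in (0:ℝ)..v, (if u ≤ s then (1:ℝ) else 0) = max v u - max 0 u := by
  rcases le_total u 0 with hu | hu
  · rw [max_eq_left hu]
    rcases le_total v u with hv | hv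
    · rw [max_eq_right hv]
      have h1 : ∫ s in (0:ℝ)..u, (if u ≤ s then (1:ℝ) else 0) = u - 0 :=
        step_int_one u 0 u (fun s hs => by
          rcases Set.mem_uIcc.mp hs with ⟨h', _⟩ | ⟨h', _⟩ <;> linarith)
      have h2 : ∫ s in u..v, (if u ≤ s then (1:ℝ) else 0) = 0 :=
        step_int_zero u u v (fun s hs => by
          rcases Set.mem_uIoc.mp hs with ⟨h', _⟩ | ⟨h', _⟩ <;> linarith)
      have h3 := intervalIntegral.integral_add_adjacent_intervals
        (step_ii u 0 u) (step_ii u u v)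
      rw [h1, h2] at h3
      linarith [h3]
    · rw [max_eq_left hv]
      have := step_int_one u 0 v (fun s hs => by
        rcases Set.mem_uIcc.mp hs with ⟨h', _⟩ | ⟨h', _⟩ <;> linarith)
      exact this
  · rw [max_eq_right hu]
    rcases le_total v u with hv | hv
    · rw [max_eq_right hv]
      have := step_int_zero u 0 v (fun s hs => by
        rcases Set.mem_uIoc.mp hs with ⟨h', _⟩ | ⟨h', _⟩ <;> linarith)
      rw [this]; ring
    · rw [max_eq_left hv]
      have h1 : ∫ s in (0:ℝ)..u, (if u ≤ s then (1:ℝ) else 0) = 0 :=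
        step_int_zero u 0 u (fun s hs => by
          rcases Set.mem_uIoc.mp hs with ⟨h', _⟩ | ⟨h', _⟩ <;> linarith)
      have h2 : ∫ s in u..v, (if u ≤ s then (1:ℝ) else 0) = v - u :=
        step_int_one u u v (fun s hs => by
          rcases Set.mem_uIcc.mp hs with ⟨h', _⟩ | ⟨h', _⟩ <;> linarith)
      have h3 := intervalIntegral.integral_add_adjacent_intervals
        (step_ii u 0 u) (step_ii u u v)
      rw [h1, h2] at h3
      linarith [h3]

/-- Knight's identity. For `τ ∈ (0,1)` and all `u, v ∈ ℝ`,
`ρ_τ(u − v) − ρ_τ(u) = −v(τ − 1_{u≤0}) + ∫₀^v (1_{u≤s} − 1_{u≤0}) ds`. -/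
theorem knight_identity (τ : ℝ) (hτ0 : 0 < τ) (hτ1 : τ < 1) :
    ∀ u v : ℝ,
      quantileLoss τ (u - v) - quantileLoss τ u =
        -v * (τ - if u ≤ 0 then 1 else 0) +
          ∫ s in (0 : ℝ)..v,
            ((if u ≤ s then (1 : ℝ) else 0) - (if u ≤ 0 then (1 : ℝ) else 0)) := by
  intro u v
  have hint : (∫ s in (0 : ℝ)..v,
      ((if u ≤ s then (1 : ℝ) else 0) - (if u ≤ 0 then (1 : ℝ) else 0)))
      = (max v u - max 0 u) - v * (if u ≤ 0 then (1:ℝ) else 0) := by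
    rw [intervalIntegral.integral_sub (step_ii u 0 v) intervalIntegrable_const,
      step_integral, intervalIntegral.integral_const]
    simp only [smul_eq_mul]
    ring
  rw [hint]
  unfold quantileLoss
  rcases le_total u 0 with hu | hu <;> rcases le_total v u with hv | hv
  · rw [max_eq_left hu, max_eq_right hv]
    split_ifs <;>
      first
      | linarith
      | ring
      | (have h0 : u = 0 := by linarith
         subst h0; ring)
      | (have h0 : v = u := by linarith
         subst h0; ring)
  · rw [max_eq_left hu, max_eq_left hv]
    split_ifs <;>
      first
      | linarith
      | ring
      | (have h0 : u = 0 := by linarith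
         subst h0; ring)
      | (have h0 : v = u := by linarith
         subst h0; ring)
  · rw [max_eq_right hu, max_eq_right hv]
    split_ifs <;>
      first
      | linarith
      | ring
      | (have h0 : u = 0 := by linarith
         subst h0; ring)
      | (have h0 : v = u := by linarith
         subst h0; ring)
  · rw [max_eq_right hu, max_eq_left hv]
    split_ifs <;>
      first
      | linarith
      | ring
      | (have h0 : u = 0 := by linarith
         subst h0; ring)
      | (have h0 : v = u := by linarith
         subst h0; ring)
end

section
/- Fix τ ∈ (0,1), let K : ℝ → [0,∞) be a measurable symmetric kernel (K(−w) = K(w)) with ∫K(w)dw = 1 and ∫|w|K(w)dw < ∞, let h > 0, and define the convolution-smoothed quantile loss ρ_{τ,h}(u) = ∫ρ_τ(v)K_h(v−u)dv, where K_h(u) = h⁻¹K(u/h). Then for every u ∈ ℝ, ρ_τ(u) ≤ ρ_{τ,h}(u) ≤ ρ_τ(u) + max(τ, 1−τ)·h·∫|w|K(w)dw. -/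
open MeasureTheory

/-- The convolution-smoothed quantile loss
`ρ_{τ,h}(u) = ∫ ρ_τ(v) K_h(v − u) dv` with `K_h(u) = h⁻¹ K(u/h)`. -/
noncomputable def smoothedQuantileLoss (τ h : ℝ) (K : ℝ → ℝ) (u : ℝ) : ℝ :=
  ∫ v, quantileLoss τ v * (K ((v - u) / h) / h)

lemma quantileLoss_eq_max (τ t : ℝ) (h0 : 0 ≤ τ) (h1 : τ ≤ 1) :
    quantileLoss τ t = max (τ * t) ((τ - 1) * t) := by
  unfold quantileLoss
  split_ifs with ht
  · rw [max_eq_right (by nlinarith)]; ring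
  · rw [max_eq_left (by nlinarith [not_lt.mp ht])]; ring

lemma quantileLoss_lipschitz (τ : ℝ) (h0 : 0 ≤ τ) (h1 : τ ≤ 1) (a b : ℝ) :
    quantileLoss τ a ≤ quantileLoss τ b + max τ (1 - τ) * |a - b| := by
  rw [quantileLoss_eq_max τ a h0 h1, quantileLoss_eq_max τ b h0 h1]
  have hab : a - b ≤ |a - b| := le_abs_self _
  have hab' : -(a - b) ≤ |a - b| := neg_le_abs _
  have habs : (0:ℝ) ≤ |a - b| := abs_nonneg _
  have hm1 : τ ≤ max τ (1 - τ) := le_max_left _ _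
  have hm2 : 1 - τ ≤ max τ (1 - τ) := le_max_right _ _
  apply max_le
  · calc τ * a ≤ τ * b + τ * |a - b| := by nlinarith
      _ ≤ max (τ * b) ((τ - 1) * b) + max τ (1 - τ) * |a - b| := by
          have := le_max_left (τ * b) ((τ - 1) * b)
          nlinarith
  · calc (τ - 1) * a ≤ (τ - 1) * b + (1 - τ) * |a - b| := by nlinarith
      _ ≤ max (τ * b) ((τ - 1) * b) + max τ (1 - τ) * |a - b| := by
          have := le_max_right (τ * b) ((τ - 1) * b)
          nlinarith

lemma quantileLoss_midpoint (τ u x : ℝ) (h0 : 0 ≤ τ) (h1 : τ ≤ 1) :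
    2 * quantileLoss τ u ≤ quantileLoss τ (u + x) + quantileLoss τ (u - x) := by
  rw [quantileLoss_eq_max τ u h0 h1, quantileLoss_eq_max τ (u + x) h0 h1,
    quantileLoss_eq_max τ (u - x) h0 h1]
  have h1' := le_max_left (τ * (u + x)) ((τ - 1) * (u + x))
  have h2' := le_max_right (τ * (u + x)) ((τ - 1) * (u + x))
  have h3' := le_max_left (τ * (u - x)) ((τ - 1) * (u - x))
  have h4' := le_max_right (τ * (u - x)) ((τ - 1) * (u - x))
  rcases max_cases (τ * u) ((τ - 1) * u) with ⟨hm, _⟩ | ⟨hm, _⟩ <;> rw [hm] <;> nlinarith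

lemma abs_quantileLoss_le (τ t : ℝ) (h0 : 0 ≤ τ) (h1 : τ ≤ 1) : |quantileLoss τ t| ≤ |t| := by
  unfold quantileLoss
  split_ifs with ht
  · rw [abs_mul, abs_of_nonpos (by linarith : τ - 1 ≤ 0)]
    nlinarith [abs_nonneg t]
  · rw [abs_mul, abs_of_nonneg (by linarith : (0:ℝ) ≤ τ - 0)]
    nlinarith [abs_nonneg t]

lemma measurable_quantileLoss (τ : ℝ) : Measurable (quantileLoss τ) := by
  unfold quantileLoss
  exact measurable_id.mul (measurable_const.sub
    (Measurable.ite (measurableSet_lt measurable_id measurable_const)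
      measurable_const measurable_const))

/-- For `τ ∈ (0,1)`, a measurable symmetric nonnegative kernel `K`
with `∫K = 1` and finite first absolute moment, and bandwidth `h > 0`,
`ρ_τ(u) ≤ ρ_{τ,h}(u) ≤ ρ_τ(u) + max(τ, 1−τ) · h · ∫|w|K(w)dw` for every `u`. -/
theorem smoothedQuantileLoss_bounds
    (τ h : ℝ) (hτ0 : 0 < τ) (hτ1 : τ < 1) (hh : 0 < h)
    (K : ℝ → ℝ) (hK_meas : Measurable K) (hK_nonneg : ∀ w, 0 ≤ K w)
    (hK_symm : ∀ w, K (-w) = K w)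
    (hK_int : Integrable K) (hK_one : ∫ w, K w = 1)
    (hK_abs : Integrable (fun w => |w| * K w)) :
    ∀ u : ℝ,
      quantileLoss τ u ≤ smoothedQuantileLoss τ h K u ∧
      smoothedQuantileLoss τ h K u ≤
        quantileLoss τ u + max τ (1 - τ) * h * ∫ w, |w| * K w := by
  intro u
  have hτ0' : 0 ≤ τ := hτ0.le
  have hτ1' : τ ≤ 1 := hτ1.le
  have hne : h ≠ 0 := hh.ne'
  -- change of variables
  have key : smoothedQuantileLoss τ h K u = ∫ w, quantileLoss τ (u + h * w) * K w := by
    unfold smoothedQuantileLoss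
    have e1 : (fun v => quantileLoss τ v * (K ((v - u) / h) / h))
        = fun v => (fun x => quantileLoss τ (u + x) * (K (x / h) / h)) (v - u) := by
      funext v; simp
    rw [e1, integral_sub_right_eq_self (fun x => quantileLoss τ (u + x) * (K (x / h) / h)) u]
    have e2 : (fun x : ℝ => quantileLoss τ (u + x) * (K (x / h) / h))
        = fun x => (fun w => quantileLoss τ (u + h * w) * (K w / h)) (x / h) := by
      funext x
      simp only
      rw [mul_div_cancel₀ _ hne]
    rw [e2, Measure.integral_comp_div (fun w => quantileLoss τ (u + h * w) * (K w / h)) h,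
      abs_of_pos hh, smul_eq_mul, ← integral_const_mul]
    congr 1; funext w; field_simp
  -- integrability
  have hmeas : ∀ c : ℝ, AEStronglyMeasurable (fun w => quantileLoss τ (u + c * w) * K w) volume := by
    intro c
    exact (((measurable_quantileLoss τ).comp
      (measurable_const.add (measurable_const.mul measurable_id))).mul hK_meas).aestronglyMeasurable
  have hint : ∀ c : ℝ, Integrable (fun w => quantileLoss τ (u + c * w) * K w) := by
    intro c
    refine ((hK_int.const_mul |u|).add (hK_abs.const_mul |c|)).mono' (hmeas c) ?_
    filter_upwards with w
    simp only [Pi.add_apply]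
    rw [Real.norm_eq_abs, abs_mul, abs_of_nonneg (hK_nonneg w)]
    have h1 := abs_quantileLoss_le τ (u + c * w) hτ0' hτ1'
    have h2 : |u + c * w| ≤ |u| + |c| * |w| := by
      calc |u + c * w| ≤ |u| + |c * w| := abs_add_le _ _
        _ = |u| + |c| * |w| := by rw [abs_mul]
    have hK0 := hK_nonneg w
    nlinarith [abs_nonneg (quantileLoss τ (u + c * w))]
  -- symmetry flip
  have hflip : ∫ w, quantileLoss τ (u + (-h) * w) * K w
      = ∫ w, quantileLoss τ (u + h * w) * K w := by
    rw [← integral_neg_eq_self (fun w => quantileLoss τ (u + h * w) * K w)]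
    congr 1; funext w
    simp only [mul_neg, neg_mul, hK_symm]
  -- lower bound
  have hlow : quantileLoss τ u ≤ ∫ w, quantileLoss τ (u + h * w) * K w := by
    have h0 : 2 * quantileLoss τ u = ∫ w, (2 * quantileLoss τ u) * K w := by
      rw [integral_const_mul, hK_one, mul_one]
    have h2 : (∫ w, (quantileLoss τ (u + h * w) * K w + quantileLoss τ (u + (-h) * w) * K w))
        = 2 * ∫ w, quantileLoss τ (u + h * w) * K w := by
      rw [integral_add (hint h) (hint (-h)), hflip]; ring
    have hmono : (∫ w, (2 * quantileLoss τ u) * K w)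
        ≤ ∫ w, (quantileLoss τ (u + h * w) * K w + quantileLoss τ (u + (-h) * w) * K w) := by
      apply integral_mono (hK_int.const_mul _) ((hint h).add (hint (-h)))
      intro w
      simp only [Pi.add_apply]
      rw [show u + (-h) * w = u - h * w by ring]
      have mid := quantileLoss_midpoint τ u (h * w) hτ0' hτ1'
      nlinarith [mul_le_mul_of_nonneg_right mid (hK_nonneg w)]
    linarith [h0 ▸ h2 ▸ hmono]
  -- upper bound
  have hup : (∫ w, quantileLoss τ (u + h * w) * K w)
      ≤ quantileLoss τ u + max τ (1 - τ) * h * ∫ w, |w| * K w := by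
    have hmono : (∫ w, quantileLoss τ (u + h * w) * K w)
        ≤ ∫ w, (quantileLoss τ u * K w + (max τ (1 - τ) * h) * (|w| * K w)) := by
      apply integral_mono (hint h) ((hK_int.const_mul _).add (hK_abs.const_mul _))
      intro w
      simp only [Pi.add_apply]
      have lip := quantileLoss_lipschitz τ hτ0' hτ1' (u + h * w) u
      rw [show u + h * w - u = h * w by ring, abs_mul, abs_of_pos hh] at lip
      nlinarith [mul_le_mul_of_nonneg_right lip (hK_nonneg w), abs_nonneg w,
        le_max_left τ (1 - τ)]
    rw [integral_add (hK_int.const_mul _) (hK_abs.const_mul _), integral_const_mul,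
      integral_const_mul, hK_one, mul_one] at hmono
    linarith
  rw [key]
  exact ⟨hlow, hup⟩
end

section
/- Fix τ ∈ (0,1), let K : ℝ → [0,∞) be a measurable kernel with ∫K(w)dw = 1 and ∫|w|K(w)dw < ∞, let h > 0, and let ρ_{τ,h}(u) = ∫ρ_τ(v)K_h(v−u)dv with K_h(u) = h⁻¹K(u/h). Then ρ_{τ,h} is differentiable on ℝ with derivative ρ_{τ,h}′(u) = τ − K̄(−u/h), where K̄(u) = ∫_{−∞}^u K(v)dv. -/
open MeasureTheory

/-- The integrated kernel `K̄(u) = ∫_{−∞}^u K(v) dv`. -/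
noncomputable def integratedKernel (K : ℝ → ℝ) (u : ℝ) : ℝ :=
  ∫ v in Set.Iic u, K v

/-!
The substitution `v = u + h w` turns `ρ_{τ,h}(u)` into `∫ ρ_τ(u + h w) K(w) dw`. Since `ρ_τ` is
Lipschitz, the integrand is Lipschitz in `u` with an integrable constant, so one may differentiate
under the integral sign, and the derivative is `∫ ρ_τ'(u + h w) K(w) dw`, where `ρ_τ'` exists off
the single point `0` and equals `τ − 1_{t<0}`. For `h > 0` this is `τ − ∫_{w < −u/h} K(w) dw`.
-/

open Filter Set Topology NNReal

lemma quantileLoss_eq_sub_min (τ t : ℝ) : quantileLoss τ t = τ * t - min t 0 := by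
  unfold quantileLoss
  rcases lt_or_ge t 0 with ht | ht
  · rw [if_pos ht, min_eq_left ht.le]; ring
  · rw [if_neg (not_lt.2 ht), min_eq_right ht]; ring

lemma lipschitzWith_quantileLoss (τ : ℝ) : LipschitzWith (‖τ‖₊ + 1) (quantileLoss τ) := by
  rw [show quantileLoss τ = fun t => τ • t - min t 0 from funext (quantileLoss_eq_sub_min τ)]
  exact (lipschitzWith_smul τ).sub (LipschitzWith.id.min_const 0)

lemma deriv_quantileLoss (τ : ℝ) {t : ℝ} (ht : t ≠ 0) :
    deriv (quantileLoss τ) t = τ - (Iio 0).indicator 1 t := by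
  rcases ht.lt_or_gt with ht | ht
  · have hloc : quantileLoss τ =ᶠ[𝓝 t] fun s => (τ - 1) * s := by
      filter_upwards [Iio_mem_nhds ht] with s (hs : s < 0)
      simp [quantileLoss, hs, mul_comm]
    simp [hloc.deriv_eq, ht]
  · have hloc : quantileLoss τ =ᶠ[𝓝 t] fun s => τ * s := by
      filter_upwards [Ioi_mem_nhds ht] with s (hs : 0 < s)
      simp [quantileLoss, hs.not_gt, mul_comm]
    simp [hloc.deriv_eq, ht.not_gt]

lemma ae_comp_add_mul {p : ℝ → Prop} (hp : ∀ᵐ t, p t) (u : ℝ) {h : ℝ} (hh : h ≠ 0) :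
    ∀ᵐ w, p (u + h * w) :=
  ((measurePreserving_add_left volume u).quasiMeasurePreserving.comp
    (Measure.quasiMeasurePreserving_smul volume hh)).ae hp

lemma integral_mul_rescaled_kernel (f K : ℝ → ℝ) {h : ℝ} (hh : 0 < h) (u : ℝ) :
    ∫ v, f v * (K ((v - u) / h) / h) = ∫ w, f (u + h * w) * K w := by
  set g : ℝ → ℝ := fun v => f v * (K ((v - u) / h) / h)
  have hg : ∀ w, f (u + h * w) * K w = h * g (u + h * w) := fun w => by
    simp only [g, add_sub_cancel_left, mul_div_cancel_left₀ _ hh.ne']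
    field_simp
  simp_rw [hg, integral_const_mul, Measure.integral_comp_mul_left (fun w => g (u + w)),
    integral_add_left_eq_self, smul_eq_mul, abs_of_pos (inv_pos.2 hh), mul_inv_cancel_left₀ hh.ne']

section LipschitzIntegrand

variable {φ K : ℝ → ℝ} {L : ℝ≥0}

lemma integrable_comp_add_mul_mul (hφ : LipschitzWith L φ) (hK : Integrable K)
    (hK₁ : Integrable fun w => |w| * K w) (x h : ℝ) :
    Integrable fun w => φ (x + h * w) * K w := by
  refine Integrable.mono' ((hK.norm.const_mul (‖φ 0‖ + L * ‖x‖)).add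
    (hK₁.norm.const_mul (L * ‖h‖))) ?_ (ae_of_all _ fun w => ?_)
  · exact (hφ.continuous.measurable.comp (by fun_prop)).aestronglyMeasurable.mul
      hK.aestronglyMeasurable
  have hgrowth : ‖φ (x + h * w)‖ ≤ ‖φ 0‖ + L * (‖x‖ + ‖h‖ * ‖w‖) :=
    calc ‖φ (x + h * w)‖ ≤ ‖φ 0‖ + ‖φ (x + h * w) - φ 0‖ := norm_le_norm_add_norm_sub' _ _
      _ ≤ ‖φ 0‖ + L * ‖x + h * w‖ := by simpa using hφ.norm_sub_le (x + h * w) 0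
      _ ≤ ‖φ 0‖ + L * (‖x‖ + ‖h‖ * ‖w‖) := by grw [norm_add_le, norm_mul]
  simp only [Pi.add_apply, norm_mul, Real.norm_eq_abs, abs_abs] at hgrowth ⊢
  calc |φ (x + h * w)| * |K w| ≤ (|φ 0| + L * (|x| + |h| * |w|)) * |K w| := by gcongr
    _ = (|φ 0| + L * |x|) * |K w| + L * |h| * (|w| * |K w|) := by ring

lemma hasDerivAt_integral_comp_add_mul_mul (hφ : LipschitzWith L φ) (hK : Integrable K)
    (hK₁ : Integrable fun w => |w| * K w) {h : ℝ} (hh : h ≠ 0) (u : ℝ) :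
    HasDerivAt (fun x => ∫ w, φ (x + h * w) * K w) (∫ w, deriv φ (u + h * w) * K w) u := by
  have hlip : ∀ w, LipschitzWith (Real.nnabs (L * |K w|)) fun x => φ (x + h * w) * K w :=
    fun w => LipschitzWith.of_dist_le_mul fun x y => by
      rw [Real.coe_nnabs, abs_of_nonneg (by positivity), Real.dist_eq, Real.dist_eq, ← sub_mul,
        abs_mul, mul_right_comm]
      gcongr
      simpa [Real.dist_eq] using hφ.dist_le_mul (x + h * w) (y + h * w)
  refine (hasDerivAt_integral_of_dominated_loc_of_lip univ_mem
    (Eventually.of_forall fun x => (integrable_comp_add_mul_mul hφ hK hK₁ x h).aestronglyMeasurable)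
    (integrable_comp_add_mul_mul hφ hK hK₁ u h) ?_ (ae_of_all _ fun w => (hlip w).lipschitzOnWith)
    (hK.abs.const_mul L) ?_).2
  · exact ((measurable_deriv φ).comp (by fun_prop)).aestronglyMeasurable.mul hK.aestronglyMeasurable
  · filter_upwards [ae_comp_add_mul hφ.ae_differentiableAt u hh] with w hw
    exact (hw.hasDerivAt.comp_add_const u (h * w)).mul_const (K w)

end LipschitzIntegrand

lemma integral_deriv_quantileLoss_comp_add_mul_mul (τ : ℝ) {h : ℝ} (hh : 0 < h) {K : ℝ → ℝ}
    (hK : Integrable K) (hK_one : ∫ w, K w = 1) (u : ℝ) :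
    ∫ w, deriv (quantileLoss τ) (u + h * w) * K w = τ - integratedKernel K (-u / h) := by
  have hae : (fun w => deriv (quantileLoss τ) (u + h * w) * K w)
      =ᵐ[volume] fun w => τ * K w - (Iio (-u / h)).indicator K w := by
    filter_upwards [ae_comp_add_mul (Measure.ae_ne volume 0) u hh.ne'] with w hw
    have hmem : u + h * w < 0 ↔ w < -u / h := by
      rw [lt_div_iff₀ hh]; constructor <;> intro <;> linarith
    by_cases hw' : w < -u / h <;> simp [deriv_quantileLoss τ hw, indicator, hmem, hw', sub_mul]
  rw [integral_congr_ae hae, integral_sub (hK.const_mul τ) (hK.indicator measurableSet_Iio),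
    integral_const_mul, hK_one, mul_one, integral_indicator measurableSet_Iio, integratedKernel,
    setIntegral_congr_set Iio_ae_eq_Iic]

theorem smoothedQuantileLoss_hasDerivAt_general
    (τ h : ℝ) (hh : 0 < h)
    (K : ℝ → ℝ)
    (hK_int : Integrable K) (hK_one : ∫ w, K w = 1)
    (hK_abs : Integrable (fun w => |w| * K w)) :
    ∀ u : ℝ,
      HasDerivAt (smoothedQuantileLoss τ h K) (τ - integratedKernel K (-u / h)) u := by
  intro u
  have hsubst : smoothedQuantileLoss τ h K = fun x => ∫ w, quantileLoss τ (x + h * w) * K w :=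
    funext (integral_mul_rescaled_kernel _ K hh)
  rw [hsubst, ← integral_deriv_quantileLoss_comp_add_mul_mul τ hh hK_int hK_one u]
  exact hasDerivAt_integral_comp_add_mul_mul (lipschitzWith_quantileLoss τ) hK_int hK_abs hh.ne' u

/-- For `τ ∈ (0,1)`, a measurable nonnegative kernel `K` with
`∫K = 1` and finite first absolute moment, and `h > 0`, the smoothed loss
`ρ_{τ,h}` is differentiable with derivative `ρ_{τ,h}′(u) = τ − K̄(−u/h)`. -/
theorem smoothedQuantileLoss_hasDerivAt
    (τ h : ℝ) (hτ0 : 0 < τ) (hτ1 : τ < 1) (hh : 0 < h)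
    (K : ℝ → ℝ) (hK_meas : Measurable K) (hK_nonneg : ∀ w, 0 ≤ K w)
    (hK_int : Integrable K) (hK_one : ∫ w, K w = 1)
    (hK_abs : Integrable (fun w => |w| * K w)) :
    ∀ u : ℝ,
      HasDerivAt (smoothedQuantileLoss τ h K) (τ - integratedKernel K (-u / h)) u :=
  smoothedQuantileLoss_hasDerivAt_general τ h hh K hK_int hK_one hK_abs
end

section
/- Let ε be a real random variable with Lebesgue density f satisfying |f(a) − f(b)| ≤ l_f |a − b| for all a, b ∈ ℝ, and with P(ε ≤ 0) = τ for some τ ∈ (0,1). Let K : ℝ → [0,∞) be a measurable symmetric kernel (K(−w) = K(w)) with ∫K(w)dw = 1 and ∫w²K(w)dw < ∞, let K̄(u) = ∫_{−∞}^u K(v)dv, and let h > 0. Then the smoothing bias satisfies |E[K̄(−ε/h)] − τ| ≤ (l_f h²/2)·∫w²K(w)dw. -/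
/-!
By Fubini, `E[K̄(−ε/h)] = ∫ F(−hv) K(v) dv`, where `F` is the distribution function of `ε`,
and `τ = F(0)`. Since `K` is symmetric with unit mass, the bias is half of
`∫ (F(hv) + F(−hv) − 2 F(0)) K(v) dv`. That symmetric second difference is
`∫₀^{hv} (f(x) − f(−x)) dx`, and the Lipschitz bound `|f(x) − f(−x)| ≤ 2 l_f |x|` makes it at
most `l_f h² v²`.
-/

open MeasureTheory

open Set

section Fubini

variable {α β : Type*} [MeasurableSpace α] [MeasurableSpace β]
  {μ : Measure α} {ν : Measure β} {f : α → ℝ} {g : β → ℝ} {s : Set (α × β)}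

theorem integral_indicator_mul_prod_left (hs : MeasurableSet s) (x : α) :
    ∫ y, s.indicator (fun p => f p.1 * g p.2) (x, y) ∂ν =
      (∫ y in Prod.mk x ⁻¹' s, g y ∂ν) * f x := by
  rw [← integral_indicator (hs.preimage measurable_prodMk_left), ← integral_mul_const]
  congr 1 with y
  by_cases hy : (x, y) ∈ s <;> simp [Set.indicator, hy, mul_comm]

theorem integral_indicator_mul_prod_right (hs : MeasurableSet s) (y : β) :
    ∫ x, s.indicator (fun p => f p.1 * g p.2) (x, y) ∂μ =
      (∫ x in (·, y) ⁻¹' s, f x ∂μ) * g y := by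
  rw [← integral_indicator (hs.preimage measurable_prodMk_right), ← integral_mul_const]
  congr 1 with x
  by_cases hx : (x, y) ∈ s <;> simp [Set.indicator, hx]

variable [SFinite μ] [SFinite ν]

theorem integrable_setIntegral_mul_of_prod (hf : Integrable f μ) (hg : Integrable g ν)
    (hs : MeasurableSet s) :
    Integrable (fun y => (∫ x in (·, y) ⁻¹' s, f x ∂μ) * g y) ν := by
  simpa only [integral_indicator_mul_prod_right hs] using
    ((hf.mul_prod hg).indicator hs).integral_prod_right

theorem integral_setIntegral_mul_swap (hf : Integrable f μ) (hg : Integrable g ν)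
    (hs : MeasurableSet s) :
    ∫ x, (∫ y in Prod.mk x ⁻¹' s, g y ∂ν) * f x ∂μ =
      ∫ y, (∫ x in (·, y) ⁻¹' s, f x ∂μ) * g y ∂ν := by
  simpa only [integral_indicator_mul_prod_left hs, integral_indicator_mul_prod_right hs] using
    integral_integral_swap (f := fun x y => s.indicator (fun p => f p.1 * g p.2) (x, y))
      ((hf.mul_prod hg).indicator hs)

end Fubini

theorem abs_integral_mul_sub_le_of_symmetric {g K : ℝ → ℝ} {C : ℝ}
    (hgK : Integrable (fun v => g v * K v)) (hK_int : Integrable K) (hK_one : ∫ v, K v = 1)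
    (hK_symm : ∀ v, K (-v) = K v) (hK_nonneg : ∀ v, 0 ≤ K v)
    (hK_mom2 : Integrable (fun v => v ^ 2 * K v))
    (hg : ∀ v, |g v + g (-v) - 2 * g 0| ≤ C * v ^ 2) :
    |(∫ v, g v * K v) - g 0| ≤ C / 2 * ∫ v, v ^ 2 * K v := by
  have hgK_neg : Integrable (fun v => g (-v) * K v) := by
    simpa only [hK_symm] using hgK.comp_neg
  have hsymm : ∫ v, g (-v) * K v = ∫ v, g v * K v := by
    conv_rhs => rw [← integral_neg_eq_self]
    simp only [hK_symm]
  have htwice : 2 * ((∫ v, g v * K v) - g 0) = ∫ v, (g v + g (-v) - 2 * g 0) * K v := by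
    have hsplit : (fun v => (g v + g (-v) - 2 * g 0) * K v) =
        fun v => (g v * K v + g (-v) * K v) - 2 * g 0 * K v := by
      ext v; ring
    rw [hsplit, integral_sub (by exact hgK.add hgK_neg) (hK_int.const_mul _),
      integral_add hgK hgK_neg, hsymm, integral_const_mul, hK_one]
    ring
  have hbound : ‖∫ v, (g v + g (-v) - 2 * g 0) * K v‖ ≤ C * ∫ v, v ^ 2 * K v := by
    rw [← integral_const_mul]
    refine norm_integral_le_of_norm_le (hK_mom2.const_mul C) (.of_forall fun v => ?_)
    rw [Real.norm_eq_abs, abs_mul, abs_of_nonneg (hK_nonneg v), ← mul_assoc]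
    exact mul_le_mul_of_nonneg_right (hg v) (hK_nonneg v)
  rw [← htwice, Real.norm_eq_abs, abs_mul, abs_two] at hbound
  linarith

section Lipschitz

variable {f : ℝ → ℝ} {L : ℝ}

theorem abs_intervalIntegral_sub_comp_neg_le (hlip : ∀ a b, |f a - f b| ≤ L * |a - b|) {c : ℝ}
    (hc : 0 ≤ c) :
    |∫ x in (0 : ℝ)..c, (f x - f (-x))| ≤ L * c ^ 2 := by
  have hbound : ∀ x ∈ Ioc 0 c, ‖f x - f (-x)‖ ≤ L * (2 * x) := fun x hx => by
    have := hlip x (-x)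
    rwa [sub_neg_eq_add, ← two_mul, abs_of_pos (by linarith [hx.1] : (0 : ℝ) < 2 * x),
      ← Real.norm_eq_abs] at this
  calc |∫ x in (0 : ℝ)..c, (f x - f (-x))|
      ≤ ∫ x in (0 : ℝ)..c, L * (2 * x) :=
        intervalIntegral.norm_integral_le_of_norm_le hc (.of_forall hbound)
          ((by fun_prop : Continuous fun x : ℝ => L * (2 * x)).intervalIntegrable 0 c)
    _ = L * c ^ 2 := by
        rw [intervalIntegral.integral_const_mul, intervalIntegral.integral_const_mul, integral_id]
        ring

theorem setIntegral_Iic_add_neg_sub_two_mul (hf : Integrable f) (c : ℝ) :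
    (∫ x in Iic c, f x) + (∫ x in Iic (-c), f x) - 2 * ∫ x in Iic 0, f x =
      ∫ x in (0 : ℝ)..c, (f x - f (-x)) := by
  rw [intervalIntegral.integral_sub hf.intervalIntegrable hf.comp_neg.intervalIntegrable,
    intervalIntegral.integral_comp_neg (fun x => f x), neg_zero, intervalIntegral.integral_symm,
    ← intervalIntegral.integral_Iic_sub_Iic hf.integrableOn hf.integrableOn,
    ← intervalIntegral.integral_Iic_sub_Iic hf.integrableOn hf.integrableOn]
  ring

theorem abs_setIntegral_Iic_add_neg_sub_two_mul_le (hf : Integrable f)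
    (hlip : ∀ a b, |f a - f b| ≤ L * |a - b|) (c : ℝ) :
    |(∫ x in Iic c, f x) + (∫ x in Iic (-c), f x) - 2 * ∫ x in Iic 0, f x| ≤ L * c ^ 2 := by
  wlog hc : 0 ≤ c generalizing c
  · simpa [add_comm] using this (-c) (by linarith)
  rw [setIntegral_Iic_add_neg_sub_two_mul hf]
  exact abs_intervalIntegral_sub_comp_neg_le hlip hc

end Lipschitz

theorem smoothing_bias_bound_general
    (τ h lf : ℝ) (hh : 0 < h)
    (f : ℝ → ℝ)
    (hf_int : Integrable f)
    (hf_lip : ∀ a b : ℝ, |f a - f b| ≤ lf * |a - b|)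
    (hquant : ∫ x in Set.Iic (0 : ℝ), f x = τ)
    (K : ℝ → ℝ) (hK_nonneg : ∀ w, 0 ≤ K w)
    (hK_symm : ∀ w, K (-w) = K w)
    (hK_int : Integrable K) (hK_one : ∫ w, K w = 1)
    (hK_mom2 : Integrable (fun w => w ^ 2 * K w)) :
    |(∫ x, integratedKernel K (-x / h) * f x) - τ| ≤
      lf * h ^ 2 / 2 * ∫ w, w ^ 2 * K w := by
  set S : Set (ℝ × ℝ) := {p | p.1 ≤ -(h * p.2)}
  have hS : MeasurableSet S := measurableSet_le measurable_fst (measurable_snd.const_mul h).neg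
  have hslice (x : ℝ) : Prod.mk x ⁻¹' S = Iic (-x / h) := by
    ext v
    rw [mem_Iic, le_div_iff₀ hh]
    change x ≤ -(h * v) ↔ _
    constructor <;> intro <;> linarith
  set g : ℝ → ℝ := fun v => ∫ x in Iic (-(h * v)), f x
  have hswap : ∫ x, integratedKernel K (-x / h) * f x = ∫ v, g v * K v := by
    simp only [integratedKernel, ← hslice]
    exact integral_setIntegral_mul_swap hf_int hK_int hS
  have hg0 : g 0 = τ := by simp only [g, mul_zero, neg_zero, hquant]
  have hg (v : ℝ) : |g v + g (-v) - 2 * g 0| ≤ lf * h ^ 2 * v ^ 2 := by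
    simpa [g, mul_pow, mul_assoc] using
      abs_setIntegral_Iic_add_neg_sub_two_mul_le hf_int hf_lip (-(h * v))
  rw [hswap, ← hg0]
  exact abs_integral_mul_sub_le_of_symmetric (integrable_setIntegral_mul_of_prod hf_int hK_int hS)
    hK_int hK_one hK_symm hK_nonneg hK_mom2 hg

/-- smoothing bias. Let `ε` have Lebesgue density `f` which is
`l_f`-Lipschitz and satisfies `P(ε ≤ 0) = τ`. For a symmetric kernel `K` with unit
mass and finite second moment and any `h > 0`, the smoothing bias satisfies
`|E[K̄(−ε/h)] − τ| ≤ (l_f h²/2) ∫ w² K(w) dw`. -/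
theorem smoothing_bias_bound
    (τ h lf : ℝ) (hτ0 : 0 < τ) (hτ1 : τ < 1) (hh : 0 < h) (hlf : 0 ≤ lf)
    (f : ℝ → ℝ) (hf_meas : Measurable f) (hf_nonneg : ∀ x, 0 ≤ f x)
    (hf_int : Integrable f) (hf_one : ∫ x, f x = 1)
    (hf_lip : ∀ a b : ℝ, |f a - f b| ≤ lf * |a - b|)
    (hquant : ∫ x in Set.Iic (0 : ℝ), f x = τ)
    (K : ℝ → ℝ) (hK_meas : Measurable K) (hK_nonneg : ∀ w, 0 ≤ K w)
    (hK_symm : ∀ w, K (-w) = K w)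
    (hK_int : Integrable K) (hK_one : ∫ w, K w = 1)
    (hK_mom2 : Integrable (fun w => w ^ 2 * K w)) :
    |(∫ x, integratedKernel K (-x / h) * f x) - τ| ≤
      lf * h ^ 2 / 2 * ∫ w, w ^ 2 * K w :=
  smoothing_bias_bound_general τ h lf hh f hf_int hf_lip hquant K hK_nonneg hK_symm hK_int hK_one
    hK_mom2
end

section
/- (Gaussian mechanism) Let ε ∈ (0,1], δ ∈ (0,1), Δ > 0, and let μ₁, μ₂ ∈ ℝ with |μ₁ − μ₂| ≤ Δ. Set σ = Δ·√(2 log(1.25/δ))/ε. Then for every Borel set A ⊆ ℝ, the Gaussian measures with means μ₁, μ₂ and variance σ² satisfy N(μ₁, σ²)(A) ≤ e^ε · N(μ₂, σ²)(A) + δ; that is, releasing a Δ-sensitive real statistic perturbed by N(0, σ²) noise is (ε,δ)-differentially private. -/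
open MeasureTheory ProbabilityTheory Real Set
open scoped NNReal ENNReal

/-!
The density of `N(μ₁, σ²)` is `exp L(x)` times that of `N(μ₂, σ²)`, where the privacy loss `L` is
affine in `x`; hence `N(μ₁, σ²)(A) ≤ e^ε N(μ₂, σ²)(A) + N(μ₁, σ²)(L > ε)`. Under `N(μ₁, σ²)` the
privacy loss is `r Z + r² / 2` with `Z` standard normal and `r = |μ₁ - μ₂| / σ ≤ ε / c`, where
`c = √(2 log (1.25 / δ))`, so `N(μ₁, σ²)(L > ε) ≤ P(Z > c - 1 / (2c))`. This is at most
`1.25 e^{-c²/2} = δ`: for `c ≥ 1 / √2` by the tail bound `P(Z > t) ≤ e^{-t²/2} / 2`, and for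
smaller `c` because then `P(Z > c - 1 / (2c)) ≤ 3 / 4` while `δ ≥ 15 / 16`.
-/

theorem MeasureTheory.Measure.apply_le_mul_add_compl {α : Type*} [MeasurableSpace α]
    {μ ν : Measure α} {S : Set α} (hS : MeasurableSet S) {c : ℝ≥0∞}
    (h : μ.restrict S ≤ c • ν.restrict S) (A : Set α) : μ A ≤ c * ν A + μ Sᶜ :=
  calc μ A ≤ μ (A ∩ S) + μ (A \ S) := measure_le_inter_add_sdiff μ A S
    _ ≤ c * ν A + μ Sᶜ := by
      gcongr
      · rw [← Measure.restrict_apply' hS]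
        exact (h A).trans (mul_le_mul_right (ν.restrict_apply_le S A) c)
      · exact sdiff_subset_compl A S

namespace ProbabilityTheory

variable {v : ℝ≥0}

lemma gaussianReal_Ioi_self (μ : ℝ) (hv : v ≠ 0) : gaussianReal μ v (Ioi μ) = 2⁻¹ := by
  have := nullSingletonClass_gaussianReal (μ := μ) hv
  have hsymm : gaussianReal μ v (Iio μ) = gaussianReal μ v (Ioi μ) := by
    have hmap : (gaussianReal μ v).map (2 * μ - ·) = gaussianReal μ v := by
      rw [gaussianReal_map_const_sub]; ring_nf
    conv_rhs => rw [← hmap]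
    rw [Measure.map_apply (by fun_prop) measurableSet_Ioi]
    congr 1
    ext x
    simp only [mem_Iio, mem_preimage, mem_Ioi]
    constructor <;> intro <;> linarith
  have htotal : gaussianReal μ v (Iio μ) + gaussianReal μ v (Ioi μ) = 1 := by
    rw [measure_congr Ioi_ae_eq_Ici, ← compl_Iio, measure_add_measure_compl measurableSet_Iio,
      measure_univ]
  rw [hsymm, ← two_mul] at htotal
  exact ENNReal.eq_inv_of_mul_eq_one_left (by rwa [mul_comm])

lemma gaussianReal_Ioi_add_le (μ : ℝ) (hv : v ≠ 0) {s : ℝ} (hs : 0 ≤ s) :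
    gaussianReal μ v (Ioi (μ + s)) ≤ ENNReal.ofReal (exp (-s ^ 2 / (2 * v)) / 2) := by
  have hpdf : ∀ x ∈ Ioi (μ + s),
      gaussianPDF μ v x ≤ ENNReal.ofReal (exp (-s ^ 2 / (2 * v))) * gaussianPDF (μ + s) v x := by
    intro x hx
    rw [gaussianPDF, gaussianPDF, ← ENNReal.ofReal_mul (exp_nonneg _), gaussianPDFReal,
      gaussianPDFReal, mul_left_comm, ← exp_add, ← add_div]
    gcongr
    nlinarith [mem_Ioi.1 hx]
  calc gaussianReal μ v (Ioi (μ + s))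
      ≤ ∫⁻ x in Ioi (μ + s),
          ENNReal.ofReal (exp (-s ^ 2 / (2 * v))) * gaussianPDF (μ + s) v x := by
        rw [gaussianReal_apply μ hv]
        exact setLIntegral_mono (by fun_prop) hpdf
    _ = ENNReal.ofReal (exp (-s ^ 2 / (2 * v))) * 2⁻¹ := by
        rw [lintegral_const_mul _ (measurable_gaussianPDF _ _), ← gaussianReal_apply _ hv,
          gaussianReal_Ioi_self _ hv]
    _ = ENNReal.ofReal (exp (-s ^ 2 / (2 * v)) / 2) := by
        rw [ENNReal.ofReal_div_of_pos two_pos, ENNReal.ofReal_ofNat, ENNReal.div_eq_inv_mul,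
          mul_comm]

lemma gaussianReal_Ioc_le (μ : ℝ) (hv : v ≠ 0) (a b : ℝ) :
    gaussianReal μ v (Ioc a b) ≤ ENNReal.ofReal ((b - a) / √(2 * π * v)) := by
  have hpdf : ∀ x ∈ Ioc a b, gaussianPDF μ v x ≤ ENNReal.ofReal (√(2 * π * v))⁻¹ := by
    intro x _
    refine ENNReal.ofReal_le_ofReal ?_
    rw [gaussianPDFReal]
    refine mul_le_of_le_one_right (by positivity) (exp_le_one_iff.2 ?_)
    exact div_nonpos_of_nonpos_of_nonneg (neg_nonpos.2 (sq_nonneg _)) (by positivity)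
  calc gaussianReal μ v (Ioc a b)
      ≤ ∫⁻ _ in Ioc a b, ENNReal.ofReal (√(2 * π * v))⁻¹ := by
        rw [gaussianReal_apply μ hv]
        exact setLIntegral_mono measurable_const hpdf
    _ = ENNReal.ofReal ((b - a) / √(2 * π * v)) := by
        rw [setLIntegral_const, volume_Ioc, ← ENNReal.ofReal_mul (by positivity), mul_comm,
          div_eq_mul_inv]

noncomputable def gaussianPrivacyLoss (μ₁ μ₂ : ℝ) (v : ℝ≥0) (x : ℝ) : ℝ :=
  (μ₁ - μ₂) * (2 * x - μ₁ - μ₂) / (2 * v)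

lemma gaussianPDFReal_eq_exp_gaussianPrivacyLoss_mul (μ₁ μ₂ : ℝ) (v : ℝ≥0) (x : ℝ) :
    gaussianPDFReal μ₁ v x = exp (gaussianPrivacyLoss μ₁ μ₂ v x) * gaussianPDFReal μ₂ v x := by
  rw [gaussianPDFReal, gaussianPDFReal, gaussianPrivacyLoss, mul_left_comm, ← exp_add, ← add_div]
  ring_nf

lemma gaussianReal_restrict_gaussianPrivacyLoss_le (μ₁ μ₂ : ℝ) (hv : v ≠ 0) (ε : ℝ) :
    (gaussianReal μ₁ v).restrict {x | gaussianPrivacyLoss μ₁ μ₂ v x ≤ ε} ≤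
      ENNReal.ofReal (exp ε) •
        (gaussianReal μ₂ v).restrict {x | gaussianPrivacyLoss μ₁ μ₂ v x ≤ ε} := by
  refine Measure.le_iff.2 fun B hB ↦ ?_
  rw [Measure.smul_apply, Measure.restrict_apply hB, Measure.restrict_apply hB,
    gaussianReal_apply _ hv, gaussianReal_apply _ hv, smul_eq_mul,
    ← lintegral_const_mul _ (measurable_gaussianPDF _ _)]
  refine setLIntegral_mono (by fun_prop) fun x hx ↦ ?_
  rw [gaussianPDF, gaussianPDF, ← ENNReal.ofReal_mul (exp_nonneg _),
    gaussianPDFReal_eq_exp_gaussianPrivacyLoss_mul μ₁ μ₂]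
  gcongr
  · exact gaussianPDFReal_nonneg _ _ _
  · exact hx.2

lemma gaussianReal_map_mul_sub_self {a : ℝ} (μ : ℝ) (ha : a ^ 2 * v = 1) :
    (gaussianReal μ v).map (fun x ↦ a * (x - μ)) = gaussianReal 0 1 := by
  have hcomp : (fun x ↦ a * (x - μ)) = (a * ·) ∘ (· - μ) := rfl
  rw [hcomp, ← Measure.map_map (by fun_prop) (by fun_prop), gaussianReal_map_sub_const,
    gaussianReal_map_const_mul, sub_self, mul_zero]
  congr
  exact NNReal.eq ha

/-- Under `N(μ₁, v)` the privacy loss is `r Z + r² / 2` with `Z` standard normal and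
`r = |μ₁ - μ₂| / √v`, whence the threshold `ε / r - r / 2`. -/
lemma gaussianReal_lt_gaussianPrivacyLoss {μ₁ μ₂ : ℝ} (hμ : μ₁ ≠ μ₂) (hv : v ≠ 0) (ε : ℝ) :
    gaussianReal μ₁ v {x | ε < gaussianPrivacyLoss μ₁ μ₂ v x} =
      gaussianReal 0 1 (Ioi (ε / (|μ₁ - μ₂| / √v) - |μ₁ - μ₂| / √v / 2)) := by
  set r := |μ₁ - μ₂| / √v
  set a := (μ₁ - μ₂) / (|μ₁ - μ₂| * √v)
  have hd : |μ₁ - μ₂| ≠ 0 := abs_ne_zero.2 (sub_ne_zero.2 hμ)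
  have hvpos : (0 : ℝ) < v := by positivity
  have hr : 0 < r := by positivity
  have ha : a ^ 2 * v = 1 := by
    rw [div_pow, mul_pow, sq_abs, sq_sqrt hvpos.le]
    field_simp
  have hloss (x : ℝ) : gaussianPrivacyLoss μ₁ μ₂ v x = r * (a * (x - μ₁)) + r ^ 2 / 2 := by
    simp only [gaussianPrivacyLoss, r, a]
    field_simp
    rw [sq_abs, sq_sqrt hvpos.le]
    ring
  rw [← gaussianReal_map_mul_sub_self μ₁ ha, Measure.map_apply (by fun_prop) measurableSet_Ioi]
  congr 1
  ext x
  rw [mem_ofPred_eq, hloss, mem_preimage, mem_Ioi, sub_lt_iff_lt_add, div_lt_iff₀ hr]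
  constructor <;> intro h <;> nlinarith

lemma gaussianReal_zero_one_Ioi_sub_inv_le {c : ℝ} (hc : 1 / 2 ≤ c) :
    gaussianReal 0 1 (Ioi (c - (2 * c)⁻¹)) ≤ ENNReal.ofReal (1.25 * exp (-c ^ 2 / 2)) := by
  rcases le_or_gt (2 * c)⁻¹ c with hpos | hneg
  · have htail := gaussianReal_Ioi_add_le 0 one_ne_zero (sub_nonneg.2 hpos)
    rw [zero_add, NNReal.coe_one, mul_one] at htail
    refine htail.trans (ENNReal.ofReal_le_ofReal ?_)
    have hcc : c * (2 * c)⁻¹ = 1 / 2 := by field_simp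
    have hexp : -(c - (2 * c)⁻¹) ^ 2 / 2 ≤ 1 / 2 + -c ^ 2 / 2 := by
      nlinarith [sq_nonneg (2 * c)⁻¹]
    have hhalf : exp (1 / 2) < 2 :=
      (exp_bound_div_one_sub_of_interval' (by norm_num) (by norm_num)).trans_eq (by norm_num)
    calc exp (-(c - (2 * c)⁻¹) ^ 2 / 2) / 2 ≤ exp (1 / 2) * exp (-c ^ 2 / 2) / 2 := by
          rw [← exp_add]; gcongr
      _ ≤ 1.25 * exp (-c ^ 2 / 2) := by nlinarith [exp_pos (-c ^ 2 / 2)]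
  · have hbox := gaussianReal_Ioc_le 0 one_ne_zero (c - (2 * c)⁻¹) 0
    rw [NNReal.coe_one, mul_one] at hbox
    have hsqrt : 2 ≤ √(2 * π) :=
      (le_sqrt zero_le_two (by positivity)).2 (by nlinarith [pi_gt_three])
    have hgap : 0 - (c - (2 * c)⁻¹) ≤ 1 / 2 := by
      have : (2 * c)⁻¹ ≤ 1 := inv_le_one_of_one_le₀ (by linarith)
      linarith
    have hc2 : c ^ 2 < 1 / 2 := by
      have := mul_lt_mul_of_pos_right hneg (by positivity : (0 : ℝ) < 2 * c)
      rw [inv_mul_cancel₀ (by positivity)] at this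
      nlinarith
    calc gaussianReal 0 1 (Ioi (c - (2 * c)⁻¹))
        = gaussianReal 0 1 (Ioc (c - (2 * c)⁻¹) 0 ∪ Ioi 0) := by
          rw [Ioc_union_Ioi_eq_Ioi (by linarith)]
      _ ≤ ENNReal.ofReal ((0 - (c - (2 * c)⁻¹)) / √(2 * π)) + ENNReal.ofReal (1 / 2) := by
          rw [one_div, ENNReal.ofReal_inv_of_pos two_pos, ENNReal.ofReal_ofNat,
            ← gaussianReal_Ioi_self 0 one_ne_zero]
          exact (measure_union_le _ _).trans (add_le_add hbox le_rfl)
      _ ≤ ENNReal.ofReal (1.25 * exp (-c ^ 2 / 2)) := by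
          rw [← ENNReal.ofReal_add (div_nonneg (by linarith) (sqrt_nonneg _)) (by norm_num)]
          refine ENNReal.ofReal_le_ofReal ?_
          have hquarter : (0 - (c - (2 * c)⁻¹)) / √(2 * π) ≤ 1 / 4 := by
            rw [div_le_iff₀ (by positivity)]; nlinarith
          nlinarith [add_one_le_exp (-c ^ 2 / 2)]

end ProbabilityTheory

namespace Real

lemma mul_exp_neg_sq_sqrt_two_mul_log_div {K δ : ℝ} (hδ : 0 < δ) (hδK : δ ≤ K) :
    K * exp (-√(2 * log (K / δ)) ^ 2 / 2) = δ := by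
  have hlog : 0 ≤ log (K / δ) := log_nonneg ((one_le_div hδ).2 hδK)
  rw [sq_sqrt (by positivity), show -(2 * log (K / δ)) / 2 = -log (K / δ) by ring, exp_neg,
    exp_log (div_pos (hδ.trans_le hδK) hδ)]
  field_simp [(hδ.trans_le hδK).ne']

lemma one_half_le_sqrt_two_mul_log_div {δ : ℝ} (hδ0 : 0 < δ) (hδ1 : δ ≤ 1) :
    1 / 2 ≤ √(2 * log (1.25 / δ)) := by
  have hlog := one_sub_inv_le_log_of_pos (x := 1.25 / δ) (by positivity)
  have hδ' : δ / 1.25 ≤ 0.8 := by rw [div_le_iff₀ (by norm_num)]; linarith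
  rw [inv_div] at hlog
  rw [le_sqrt (by norm_num) (by linarith)]
  linarith

end Real

lemma sub_inv_two_mul_le_div_sub_half {c ε r : ℝ} (hc : 0 < c) (hε : ε ≤ 1) (hr : 0 < r)
    (hrc : r * c ≤ ε) : c - (2 * c)⁻¹ ≤ ε / r - r / 2 := by
  have h₁ : c ≤ ε / r := (le_div_iff₀ hr).2 (by linarith [mul_comm r c])
  have h₂ : r / 2 ≤ (2 * c)⁻¹ := by
    rw [← one_div, le_div_iff₀ (by positivity)]
    nlinarith
  linarith

/-- Gaussian mechanism. For `ε ∈ (0,1]`, `δ ∈ (0,1)`, sensitivity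
`Δ > 0`, means `μ₁, μ₂` with `|μ₁ − μ₂| ≤ Δ`, and `σ = Δ√(2 log(1.25/δ))/ε`, the
Gaussian measures with variance `σ²` satisfy, for every Borel set `A`,
`N(μ₁, σ²)(A) ≤ e^ε N(μ₂, σ²)(A) + δ`; i.e. the Gaussian mechanism is
`(ε,δ)`-differentially private. -/
theorem gaussian_mechanism_dp
    (ε δ Δ : ℝ) (hε0 : 0 < ε) (hε1 : ε ≤ 1) (hδ0 : 0 < δ) (hδ1 : δ < 1)
    (hΔ : 0 < Δ) (μ₁ μ₂ : ℝ) (hμ : |μ₁ - μ₂| ≤ Δ)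
    (σ : ℝ) (hσ : σ = Δ * Real.sqrt (2 * Real.log (1.25 / δ)) / ε) :
    ∀ A : Set ℝ, MeasurableSet A →
      gaussianReal μ₁ (Real.toNNReal (σ ^ 2)) A ≤
        ENNReal.ofReal (Real.exp ε) * gaussianReal μ₂ (Real.toNNReal (σ ^ 2)) A +
          ENNReal.ofReal δ := by
  intro A _
  by_cases hμ₁₂ : μ₁ = μ₂
  · subst hμ₁₂
    exact le_add_right (le_mul_of_one_le_left' (ENNReal.one_le_ofReal.2 (one_le_exp hε0.le)))
  have hc : 1 / 2 ≤ √(2 * log (1.25 / δ)) := one_half_le_sqrt_two_mul_log_div hδ0 hδ1.le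
  have hσ0 : 0 < σ := hσ ▸ div_pos (mul_pos hΔ (by linarith)) hε0
  set v := (σ ^ 2).toNNReal
  have hv : v ≠ 0 := by simp [v, hσ0.ne']
  have hsqrt_v : √(v : ℝ) = σ := by rw [coe_toNNReal _ (sq_nonneg σ), sqrt_sq hσ0.le]
  have hS : MeasurableSet {x | gaussianPrivacyLoss μ₁ μ₂ v x ≤ ε} :=
    measurableSet_le (by unfold gaussianPrivacyLoss; fun_prop) measurable_const
  refine (Measure.apply_le_mul_add_compl hS
    (gaussianReal_restrict_gaussianPrivacyLoss_le μ₁ μ₂ hv ε) A).trans (add_le_add le_rfl ?_)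
  simp_rw [compl_ofPred, not_le]
  rw [gaussianReal_lt_gaussianPrivacyLoss hμ₁₂ hv, hsqrt_v,
    ← mul_exp_neg_sq_sqrt_two_mul_log_div hδ0 (by linarith : δ ≤ 1.25)]
  refine (measure_mono (Ioi_subset_Ioi ?_)).trans (gaussianReal_zero_one_Ioi_sub_inv_le hc)
  refine sub_inv_two_mul_le_div_sub_half (by linarith) hε1 (by positivity) ?_
  rw [div_mul_eq_mul_div, div_le_iff₀ hσ0, hσ, mul_div_cancel₀ _ hε0.ne']
  exact mul_le_mul_of_nonneg_right hμ (by linarith)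
end
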